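/- Let M be a metric space with distinguished point 0 and suppose there exist 0 < a ≤ b such that a ≤ d(x,y) ≤ b for all distinct x, y ∈ M (i.e., M is bounded and uniformly separated). Then the Lipschitz-free space F(M) has the (b/a)-Schur property. -/

import Mathlib

open Filter Metric Topology

/-- The oscillation `ca(x_n) = inf_n diam {x_k : k ≥ n}` of a sequence. -/
noncomputable def ca {X : Type*} [PseudoMetricSpace X] (x : ℕ → X) : ℝ :=
  ⨅ n : ℕ, Metric.diam (x '' Set.Ici n)

/-- `δ(x_n) = sup {ca(⟨x*, x_n⟩) : x* ∈ B_{X*}}`, the measure of weak non-Cauchyness. -/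
noncomputable def delta {X : Type*} [NormedAddCommGroup X] [NormedSpace ℝ X] (x : ℕ → X) : ℝ :=
  sSup {r : ℝ | ∃ f : X →L[ℝ] ℝ, ‖f‖ ≤ 1 ∧ r = ca fun n => f (x n)}

lemma ca_le_of_tail {X : Type*} [PseudoMetricSpace X] (zz : ℕ → X) (n : ℕ) {C : ℝ} (hC : 0 ≤ C)
    (h : ∀ k ≥ n, ∀ j ≥ n, dist (zz k) (zz j) ≤ C) : ca zz ≤ C := by
  have hb : BddBelow (Set.range fun m => Metric.diam (zz '' Set.Ici m)) :=
    ⟨0, by rintro r ⟨m, rfl⟩; exact Metric.diam_nonneg⟩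
  refine ciInf_le_of_le hb n (Metric.diam_le_of_forall_dist_le hC ?_)
  rintro x ⟨k, hk, rfl⟩ y ⟨j, hj, rfl⟩
  exact h k hk j hj

lemma tail_of_ca {s : ℕ → ℝ} {B c η : ℝ} (hB : ∀ n, |s n| ≤ B) (h : ca s ≤ c) (hη : 0 < η) :
    ∃ n, ∀ k ≥ n, ∀ j ≥ n, |s k - s j| ≤ c + η := by
  by_contra hcon
  push_neg at hcon
  have hge : c + η ≤ ca s := by
    refine le_ciInf fun n => ?_
    obtain ⟨k, hk, j, hj, hkj⟩ := hcon n
    have hbdd : Bornology.IsBounded (s '' Set.Ici n) := by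
      refine (Metric.isBounded_Icc (-B) B).subset ?_
      rintro x ⟨m, _, rfl⟩
      exact abs_le.mp (hB m)
    have hd := Metric.dist_le_diam_of_mem hbdd ⟨k, hk, rfl⟩ ⟨j, hj, rfl⟩
    rw [Real.dist_eq] at hd
    linarith
  linarith

lemma interval_bound {Γ : Type*} {b : ℝ} (hb : 0 ≤ b) (u h : Γ → ℝ)
    (hu : Summable fun x => |u x|) (hh : ∀ x y, |h x - h y| ≤ b) (x₀ : Γ) (hx₀ : h x₀ = 0) :
    |∑' x, u x * h x| ≤ b * max (∑' x, max (u x) 0) (∑' x, max (-u x) 0) := by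
  have : Nonempty Γ := ⟨x₀⟩
  set s : ℝ := ⨅ x, h x with hs
  have hbdd : BddBelow (Set.range h) := by
    refine ⟨-b, ?_⟩
    rintro r ⟨x, rfl⟩
    have := abs_le.mp (hh x₀ x)
    linarith [this.1, hx₀]
  have hlb : ∀ x, s ≤ h x := fun x => ciInf_le hbdd x
  have hs0 : s ≤ 0 := le_of_le_of_eq (hlb x₀) hx₀
  have hsb : -b ≤ s := le_ciInf fun x => by
    have := abs_le.mp (hh x₀ x); linarith [this.2, hx₀]
  have hub : ∀ x, h x ≤ s + b := fun x => by
    have : h x - b ≤ s := le_ciInf fun y => by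
      have := abs_le.mp (hh x y); linarith [this.1]
    linarith
  have hsu : Summable u := summable_abs_iff.mp hu
  have hsP : Summable fun x => max (u x) 0 :=
    hu.of_nonneg_of_le (fun x => le_max_right _ _)
      (fun x => max_le (le_abs_self _) (abs_nonneg _))
  have hsN : Summable fun x => max (-u x) 0 :=
    hu.of_nonneg_of_le (fun x => le_max_right _ _)
      (fun x => max_le (neg_le_abs _) (abs_nonneg _))
  set P := ∑' x, max (u x) 0
  set N := ∑' x, max (-u x) 0
  have hP0 : 0 ≤ P := tsum_nonneg fun x => le_max_right _ _
  have hN0 : 0 ≤ N := tsum_nonneg fun x => le_max_right _ _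
  have hPN : ∑' x, u x = P - N := by
    rw [← Summable.tsum_sub hsP hsN]
    congr 1; funext x
    rcases le_total (u x) 0 with h1 | h1
    · rw [max_eq_right h1, max_eq_left (by linarith)]; ring
    · rw [max_eq_left h1, max_eq_right (by linarith)]; ring
  have hsuh : Summable fun x => u x * h x := by
    have hbnd : ∀ x, |u x * h x| ≤ |u x| * (|s| + b) := fun x => by
      rw [abs_mul]
      refine mul_le_mul_of_nonneg_left ?_ (abs_nonneg _)
      have h1 := hlb x; have h2 := hub x
      rw [abs_le]; constructor
      · linarith [neg_abs_le s]
      · linarith [le_abs_self s]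
    exact summable_abs_iff.mp ((hu.mul_right (|s| + b)).of_nonneg_of_le (fun x => abs_nonneg _) hbnd)
  have key1 : ∑' x, u x * h x ≤ b * P + s * (P - N) := by
    have hpt : ∀ x, u x * h x ≤ max (u x) 0 * b + u x * s := fun x => by
      rcases le_total 0 (u x) with h1 | h1
      · rw [max_eq_left h1]
        nlinarith [hub x, hlb x]
      · rw [max_eq_right h1]
        nlinarith [hub x, hlb x]
    calc ∑' x, u x * h x ≤ ∑' x, (max (u x) 0 * b + u x * s) :=
          Summable.tsum_le_tsum hpt hsuh ((hsP.mul_right b).add (hsu.mul_right s))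
      _ = P * b + (∑' x, u x) * s := by
          rw [Summable.tsum_add (hsP.mul_right b) (hsu.mul_right s), tsum_mul_right, tsum_mul_right]
      _ = b * P + s * (P - N) := by rw [hPN]; ring
  have key2 : -(b * N) + s * (P - N) ≤ ∑' x, u x * h x := by
    have hpt : ∀ x, -(max (-u x) 0 * b) + u x * s ≤ u x * h x := fun x => by
      rcases le_total 0 (u x) with h1 | h1
      · rw [max_eq_right (by linarith)]
        nlinarith [hub x, hlb x]
      · rw [max_eq_left (by linarith)]
        nlinarith [hub x, hlb x]
    calc -(b * N) + s * (P - N) = ∑' x, (-(max (-u x) 0 * b) + u x * s) := by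
          rw [Summable.tsum_add ((hsN.mul_right b).neg) (hsu.mul_right s), tsum_neg, tsum_mul_right, tsum_mul_right, hPN]
          ring
      _ ≤ ∑' x, u x * h x := Summable.tsum_le_tsum hpt (((hsN.mul_right b).neg).add (hsu.mul_right s)) hsuh
  rcases le_total P N with hc | hc
  · rw [max_eq_right hc]
    rw [abs_le]; constructor <;> nlinarith
  · rw [max_eq_left hc]
    rw [abs_le]; constructor <;> nlinarith

lemma tsum_indicator_finset' {Γ : Type*} (f : Γ → ℝ) (T : Finset Γ) :
    ∑' x, Set.indicator (↑T) f x = ∑ x ∈ T, f x := by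
  rw [← tsum_subtype]
  exact Finset.tsum_subtype T f

lemma tail_small {Γ : Type*} {f : Γ → ℝ} (hf : Summable fun x => |f x|) {δ : ℝ} (hδ : 0 < δ) :
    ∃ T : Finset Γ, ∑' x, Set.indicator (↑T : Set Γ)ᶜ (fun x => |f x|) x < δ := by
  have hH : HasSum (fun x => |f x|) (∑' x, |f x|) := hf.hasSum
  have hev : ∀ᶠ T : Finset Γ in atTop, dist (∑ x ∈ T, |f x|) (∑' x, |f x|) < δ :=
    hH.eventually (Metric.ball_mem_nhds _ hδ)
  obtain ⟨T, hT⟩ := hev.exists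
  refine ⟨T, ?_⟩
  have hsplit : ∑' x, |f x| = (∑ x ∈ T, |f x|) + ∑' x, Set.indicator (↑T : Set Γ)ᶜ (fun x => |f x|) x := by
    rw [← tsum_indicator_finset' (fun x => |f x|) T,
      ← Summable.tsum_add (hf.indicator _) (hf.indicator _)]
    congr 1; funext x
    by_cases hx : x ∈ (↑T : Set Γ) <;> simp [Set.indicator_apply, hx]
  rw [Real.dist_eq] at hT
  have := abs_lt.mp hT
  linarith [this.1, this.2]

lemma core {Γ : Type*} (B : ℝ) (u : ℕ → Γ → ℝ)
    (hu : ∀ n, Summable fun x => |u n x|)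
    (hB : ∀ n, ∑' x, |u n x| ≤ B)
    (c ε : ℝ) (hε : 0 < ε)
    (H : ∀ v : Γ → ℝ, (∀ x, 0 ≤ v x ∧ v x ≤ 1) →
      ∃ n, ∀ k ≥ n, ∀ j ≥ n, |∑' x, (u k x - u j x) * v x| ≤ c + ε / 2) :
    ∃ n, ∀ k ≥ n, ∀ j ≥ n, (∑' x, max (u k x - u j x) 0) ≤ c + ε := by
  classical
  by_contra hcon
  push_neg at hcon
  choose K hK J hJ hP using hcon
  set w : ℕ → Γ → ℝ := fun n x => u (K n) x - u (J n) x with hw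
  have husum : ∀ n, Summable (u n) := fun n => summable_abs_iff.mp (hu n)
  have hwsum : ∀ n, Summable (w n) := fun n => (husum (K n)).sub (husum (J n))
  have hwabs : ∀ n, Summable fun x => |w n x| := fun n => summable_abs_iff.mpr (hwsum n)
  have hwtsum : ∀ n, ∑' x, |w n x| ≤ 2 * B := fun n => by
    have h1 : ∀ x, |w n x| ≤ |u (K n) x| + |u (J n) x| := fun x => abs_sub _ _
    calc ∑' x, |w n x| ≤ ∑' x, (|u (K n) x| + |u (J n) x|) :=
        Summable.tsum_le_tsum h1 (hwabs n) ((hu _).add (hu _))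
      _ = (∑' x, |u (K n) x|) + ∑' x, |u (J n) x| := Summable.tsum_add (hu _) (hu _)
      _ ≤ 2 * B := by linarith [hB (K n), hB (J n)]
  have hwpt : ∀ n x, |w n x| ≤ 2 * B := fun n x =>
    le_trans (Summable.le_tsum (hwabs n) x fun j _ => abs_nonneg _) (hwtsum n)
  -- countable support, pointwise convergent subsequence
  set S : Set Γ := ⋃ n, Function.support (w n) with hS
  have hScount : S.Countable := Set.countable_iUnion fun n => (hwsum n).countable_support
  haveI : Countable ↥S := hScount.to_subtype
  have hboxc : IsCompact (Set.univ.pi fun _ : ↥S => Set.Icc (-(2*B)) (2*B)) :=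
    isCompact_univ_pi fun _ => isCompact_Icc
  have hmem : ∀ n, (fun p : ↥S => w n ↑p) ∈ (Set.univ.pi fun _ : ↥S => Set.Icc (-(2*B)) (2*B)) := by
    intro n p _
    exact abs_le.mp (hwpt n ↑p)
  obtain ⟨L, -, φ, hφ, hconv⟩ := hboxc.tendsto_subseq hmem
  have hconv' : ∀ p : ↥S, Tendsto (fun i => w (φ i) ↑p) atTop (𝓝 (L p)) :=
    fun p => (tendsto_pi_nhds.mp hconv) p
  set W : Γ → ℝ := fun x => if hx : x ∈ S then L ⟨x, hx⟩ else 0 with hWdef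
  set y : ℕ → Γ → ℝ := fun i => w (φ i) with hy
  have hylim : ∀ x, Tendsto (fun i => y i x) atTop (𝓝 (W x)) := by
    intro x
    by_cases hx : x ∈ S
    · have h0 := hconv' ⟨x, hx⟩
      have : W x = L ⟨x, hx⟩ := by rw [hWdef]; simp [hx]
      rw [this]
      exact h0
    · have hzero : ∀ i, y i x = 0 := fun i => by
        by_contra h0
        exact hx (Set.mem_iUnion.mpr ⟨φ i, h0⟩)
      have h0 : (fun i => y i x) = fun _ => (0:ℝ) := funext hzero
      have h1 : W x = 0 := by rw [hWdef]; simp [hx]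
      rw [h0, h1]
      exact tendsto_const_nhds
  have hyabs : ∀ i, Summable fun x => |y i x| := fun i => hwabs (φ i)
  have hysum : ∀ i, Summable (y i) := fun i => hwsum (φ i)
  have hytsum : ∀ i, ∑' x, |y i x| ≤ 2 * B := fun i => hwtsum (φ i)
  -- W is absolutely summable
  have hWabs : Summable fun x => |W x| := by
    refine summable_of_sum_le (c := 2*B) (fun x => abs_nonneg _) fun T => ?_
    have hlim : Tendsto (fun i => ∑ x ∈ T, |y i x|) atTop (𝓝 (∑ x ∈ T, |W x|)) :=
      tendsto_finset_sum T fun x _ => (hylim x).abs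
    refine le_of_tendsto hlim (Filter.Eventually.of_forall fun i => ?_)
    exact le_trans (Summable.sum_le_tsum T (fun x _ => abs_nonneg _) (hyabs i)) (hytsum i)
  have hWsum : Summable W := summable_abs_iff.mp hWabs
  set δ' : ℝ := ε / 16 with hδ'
  have hδ'pos : 0 < δ' := by positivity
  obtain ⟨T₀, hT₀⟩ := tail_small hWabs hδ'pos
  -- recursive construction of humps
  have step : ∀ (T : Finset Γ) (i : ℕ), ∃ p : ℕ × Finset Γ,
      i < p.1 ∧ (∑ x ∈ T, |y p.1 x - W x| < δ') ∧
      ∑' x, Set.indicator (↑p.2 : Set Γ)ᶜ (fun x => |y p.1 x|) x < δ' := by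
    intro T i
    have hlim : Tendsto (fun m => ∑ x ∈ T, |y m x - W x|) atTop (𝓝 0) := by
      have h0 : Tendsto (fun m => ∑ x ∈ T, |y m x - W x|) atTop (𝓝 (∑ x ∈ T, |W x - W x|)) :=
        tendsto_finset_sum T fun x _ => ((hylim x).sub tendsto_const_nhds).abs
      simpa using h0
    have hev : ∀ᶠ m in atTop, ∑ x ∈ T, |y m x - W x| < δ' :=
      hlim.eventually (gt_mem_nhds hδ'pos)
    obtain ⟨m, hm1, hm2⟩ := (hev.and (eventually_gt_atTop i)).exists
    obtain ⟨R, hR⟩ := tail_small (hyabs m) hδ'pos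
    exact ⟨(m, R), hm2, hm1, hR⟩
  choose! nxt hn1 hn2 hn3 using step
  set G : ℕ → ℕ × Finset Γ :=
    fun m => Nat.rec (0, T₀) (fun _ p => ((nxt p.2 p.1).1, p.2 ∪ (nxt p.2 p.1).2)) m with hG
  set idx : ℕ → ℕ := fun m => (G m).1 with hidxdef
  set Tm : ℕ → Finset Γ := fun m => (G m).2 with hTmdef
  set R : ℕ → Finset Γ := fun m => (nxt (Tm m) (idx m)).2 with hRdef
  have hidx : ∀ m, idx (m+1) = (nxt (Tm m) (idx m)).1 := fun m => rfl
  have hTms : ∀ m, Tm (m+1) = Tm m ∪ R m := fun m => rfl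
  have hidxlt : ∀ m, idx m < idx (m+1) := fun m => hn1 (Tm m) (idx m)
  have hidxmono : StrictMono idx := strictMono_nat_of_lt_succ hidxlt
  have hidxge : ∀ m, m ≤ idx m := fun m => hidxmono.le_apply
  have hTmono : ∀ {m m'}, m ≤ m' → Tm m ⊆ Tm m' := by
    intro m m' hmm
    induction hmm with
    | refl => exact Finset.Subset.refl _
    | step h ih => exact fun x hx => by rw [hTms]; exact Finset.mem_union_left _ (ih hx)
  have hT₀sub : ∀ m, T₀ ⊆ Tm m := fun m => hTmono (Nat.zero_le m)
  have hRsub : ∀ m, R m ⊆ Tm (m+1) := fun m => by rw [hTms]; exact Finset.subset_union_right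
  have h1 : ∀ m, ∑ x ∈ Tm m, |y (idx (m+1)) x - W x| < δ' := fun m => hn2 (Tm m) (idx m)
  have h2 : ∀ m, ∑' x, Set.indicator (↑(R m) : Set Γ)ᶜ (fun x => |y (idx (m+1)) x|) x < δ' :=
    fun m => hn3 (Tm m) (idx m)
  set Sm : ℕ → Set Γ := fun m => {x | x ∈ R m ∧ x ∉ Tm m ∧ 0 < y (idx (m+1)) x} with hSmdef
  set A : Set Γ := {x | x ∈ T₀ ∧ 0 < W x} ∪ ⋃ m, Sm m with hAdef
  have hSmA : ∀ m, Sm m ⊆ A := fun m => le_trans (Set.subset_iUnion Sm m) Set.subset_union_right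
  have hSmnT₀ : ∀ m x, x ∈ Sm m → x ∉ T₀ := fun m x hx hc => hx.2.1 (hT₀sub m hc)
  have hAT : ∀ m x, x ∈ A → x ∈ Tm m → (x ∈ T₀ ∧ 0 < W x) ∨ ∃ m' , x ∈ Sm m' ∧ m' < m := by
    intro m x hxA hxT
    rcases hxA with hx1 | hx2
    · exact Or.inl hx1
    · obtain ⟨m', hm'⟩ := Set.mem_iUnion.mp hx2
      refine Or.inr ⟨m', hm', ?_⟩
      by_contra hlt
      push_neg at hlt
      exact hm'.2.1 (hTmono hlt hxT)
  have hAS : ∀ m x, x ∈ A → x ∉ Tm m → x ∈ R m → x ∈ Sm m := by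
    intro m x hxA hxT hxR
    rcases hxA with hx1 | hx2
    · exact absurd (hT₀sub m hx1.1) hxT
    · obtain ⟨m', hm'⟩ := Set.mem_iUnion.mp hx2
      rcases lt_trichotomy m' m with hc | hc | hc
      · exact absurd (hTmono hc (hRsub m' (hm'.1))) hxT
      · rwa [← hc]
      · exact absurd (hTmono hc (hRsub m hxR)) hm'.2.1
  -- apply the hypothesis H to the indicator of A
  obtain ⟨n, hn⟩ := H (A.indicator fun _ => 1) (by
    intro x
    by_cases hx : x ∈ A <;> simp [Set.indicator_apply, hx])
  set i := idx (n+1) with hidef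
  set Y : Γ → ℝ := y i with hYdef
  have hk : K (φ i) ≥ n :=
    le_trans (le_trans (Nat.le_succ n) (le_trans (hidxge (n+1)) hφ.le_apply)) (hK (φ i))
  have hj : J (φ i) ≥ n :=
    le_trans (le_trans (Nat.le_succ n) (le_trans (hidxge (n+1)) hφ.le_apply)) (hJ (φ i))
  have hbound := hn (K (φ i)) hk (J (φ i)) hj
  have hYA : (fun x => (u (K (φ i)) x - u (J (φ i)) x) * (A.indicator (fun _ => (1:ℝ)) x))
      = A.indicator Y := by
    funext x
    by_cases hx : x ∈ A <;> simp [Set.indicator_apply, hx, hYdef, hy, hw]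
  rw [hYA] at hbound
  -- summability facts
  have hYsum : Summable Y := hysum i
  have hYabs : Summable fun x => |Y x| := hyabs i
  have hYW : Summable fun x => |Y x - W x| := summable_abs_iff.mpr (hYsum.sub hWsum)
  have hWP : Summable fun x => max (W x) 0 :=
    hWabs.of_nonneg_of_le (fun x => le_max_right _ _)
      (fun x => max_le (le_abs_self _) (abs_nonneg _))
  have hYPs : Summable fun x => max (Y x) 0 :=
    hYabs.of_nonneg_of_le (fun x => le_max_right _ _)
      (fun x => max_le (le_abs_self _) (abs_nonneg _))
  set PW : ℝ := ∑' x, max (W x) 0 with hPWdef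
  set PY : ℝ := ∑' x, max (Y x) 0 with hPYdef
  have hPYbig : c + ε < PY := hP (φ i)
  -- abbreviations
  set T : Finset Γ := Tm n with hTdef
  set RR : Finset Γ := R n with hRRdef
  set SS : Set Γ := Sm n with hSSdef
  have h1n : ∑ x ∈ T, |Y x - W x| < δ' := h1 n
  have h2n : ∑' x, Set.indicator (↑RR : Set Γ)ᶜ (fun x => |Y x|) x < δ' := h2 n
  have hSsubR : SS ⊆ (↑RR : Set Γ) := fun x hx => hx.1
  have hSnotT : ∀ x ∈ SS, x ∉ (↑T : Set Γ) := fun x hx => hx.2.1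
  have hSpos : ∀ x ∈ SS, 0 < Y x := fun x hx => hx.2.2
  -- three-way split
  have hsum1 : Summable ((A ∩ ↑T).indicator Y) := hYsum.indicator _
  have hsum2 : Summable (SS.indicator Y) := hYsum.indicator _
  have hsum3 : Summable ((A \ (↑T ∪ ↑RR)).indicator Y) := hYsum.indicator _
  have hsplitpt : ∀ x, A.indicator Y x =
      (A ∩ ↑T).indicator Y x + SS.indicator Y x + (A \ (↑T ∪ ↑RR)).indicator Y x := by
    intro x
    by_cases hxA : x ∈ A
    · by_cases hxT : x ∈ (↑T : Set Γ)
      · have e1 : x ∈ A ∩ ↑T := ⟨hxA, hxT⟩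
        have e2 : x ∉ SS := fun hS => hSnotT x hS hxT
        have e3 : x ∉ A \ (↑T ∪ ↑RR) := fun hS => hS.2 (Or.inl hxT)
        rw [Set.indicator_of_mem hxA, Set.indicator_of_mem e1,
          Set.indicator_of_notMem e2, Set.indicator_of_notMem e3]
        ring
      · by_cases hxR : x ∈ (↑RR : Set Γ)
        · have e1 : x ∉ A ∩ ↑T := fun hS => hxT hS.2
          have e2 : x ∈ SS := hAS n x hxA hxT hxR
          have e3 : x ∉ A \ (↑T ∪ ↑RR) := fun hS => hS.2 (Or.inr hxR)
          rw [Set.indicator_of_mem hxA, Set.indicator_of_mem e2,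
            Set.indicator_of_notMem e1, Set.indicator_of_notMem e3]
          ring
        · have e1 : x ∉ A ∩ ↑T := fun hS => hxT hS.2
          have e2 : x ∉ SS := fun hS => hxR (hSsubR hS)
          have e3 : x ∈ A \ (↑T ∪ ↑RR) := ⟨hxA, fun hc => hc.elim hxT hxR⟩
          rw [Set.indicator_of_mem hxA, Set.indicator_of_mem e3,
            Set.indicator_of_notMem e1, Set.indicator_of_notMem e2]
          ring
    · have e1 : x ∉ A ∩ ↑T := fun hS => hxA hS.1
      have e2 : x ∉ SS := fun hS => hxA (hSmA n hS)
      have e3 : x ∉ A \ (↑T ∪ ↑RR) := fun hS => hxA hS.1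
      rw [Set.indicator_of_notMem hxA, Set.indicator_of_notMem e1,
        Set.indicator_of_notMem e2, Set.indicator_of_notMem e3]
      ring
  have htsplit : ∑' x, A.indicator Y x =
      (∑' x, (A ∩ ↑T).indicator Y x) + (∑' x, SS.indicator Y x)
        + ∑' x, (A \ (↑T ∪ ↑RR)).indicator Y x := by
    calc ∑' x, A.indicator Y x
        = ∑' x, ((A ∩ ↑T).indicator Y x + SS.indicator Y x + (A \ (↑T ∪ ↑RR)).indicator Y x) :=
          tsum_congr hsplitpt
      _ = _ := by rw [Summable.tsum_add (hsum1.add hsum2) hsum3, Summable.tsum_add hsum1 hsum2]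
  -- term 3 : the far tail
  have hindRR : Summable (Set.indicator (↑RR : Set Γ)ᶜ fun x => |Y x|) := hYabs.indicator _
  have hterm3 : -δ' ≤ ∑' x, (A \ (↑T ∪ ↑RR)).indicator Y x := by
    have hpt : ∀ x, -(Set.indicator (↑RR : Set Γ)ᶜ (fun x => |Y x|) x)
        ≤ (A \ (↑T ∪ ↑RR)).indicator Y x := by
      intro x
      by_cases hx : x ∈ A \ (↑T ∪ ↑RR)
      · have hxR : x ∈ (↑RR : Set Γ)ᶜ := fun hc => hx.2 (Or.inr hc)
        rw [Set.indicator_of_mem hx, Set.indicator_of_mem hxR]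
        linarith [neg_abs_le (Y x)]
      · rw [Set.indicator_of_notMem hx]
        have h0 : 0 ≤ Set.indicator (↑RR : Set Γ)ᶜ (fun x => |Y x|) x :=
          Set.indicator_nonneg (fun _ _ => abs_nonneg _) x
        linarith
    have hts := Summable.tsum_le_tsum hpt hindRR.neg hsum3
    rw [tsum_neg] at hts
    linarith
  -- term 1 : the part carried by W
  have hT₀sum : Summable (Set.indicator (↑T₀ : Set Γ)ᶜ fun x => |W x|) := hWabs.indicator _
  have hTYW : Summable (Set.indicator (↑T : Set Γ) fun x => |Y x - W x|) := hYW.indicator _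
  have hWind : Summable ((A ∩ ↑T).indicator W) := hWsum.indicator _
  have hB0sum : Summable ({x | x ∈ T₀ ∧ 0 < W x}.indicator W) := hWsum.indicator _
  have hTYWlt : ∑' x, Set.indicator (↑T : Set Γ) (fun x => |Y x - W x|) x < δ' := by
    rw [tsum_indicator_finset']
    exact h1n
  have hstep1 : (∑' x, (A ∩ ↑T).indicator W x)
      - (∑' x, Set.indicator (↑T : Set Γ) (fun x => |Y x - W x|) x)
      ≤ ∑' x, (A ∩ ↑T).indicator Y x := by
    have hpt : ∀ x, (A ∩ ↑T).indicator W x - Set.indicator (↑T : Set Γ) (fun x => |Y x - W x|) x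
        ≤ (A ∩ ↑T).indicator Y x := by
      intro x
      by_cases hx : x ∈ A ∩ ↑T
      · rw [Set.indicator_of_mem hx, Set.indicator_of_mem hx, Set.indicator_of_mem hx.2]
        have := abs_le.mp (le_refl |Y x - W x|) |>.1
        linarith [neg_abs_le (Y x - W x), le_abs_self (Y x - W x)]
      · rw [Set.indicator_of_notMem hx, Set.indicator_of_notMem hx]
        have h0 : 0 ≤ Set.indicator (↑T : Set Γ) (fun x => |Y x - W x|) x :=
          Set.indicator_nonneg (fun _ _ => abs_nonneg _) x
        linarith
    have hts := Summable.tsum_le_tsum hpt (hWind.sub hTYW) hsum1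
    rw [Summable.tsum_sub hWind hTYW] at hts
    exact hts
  have hstep2 : (∑' x, {x | x ∈ T₀ ∧ 0 < W x}.indicator W x)
      - (∑' x, Set.indicator (↑T₀ : Set Γ)ᶜ (fun x => |W x|) x)
      ≤ ∑' x, (A ∩ ↑T).indicator W x := by
    have hpt : ∀ x, {x | x ∈ T₀ ∧ 0 < W x}.indicator W x
        - Set.indicator (↑T₀ : Set Γ)ᶜ (fun x => |W x|) x ≤ (A ∩ ↑T).indicator W x := by
      intro x
      by_cases hx : x ∈ {x | x ∈ T₀ ∧ 0 < W x}
      · have hxA : x ∈ A ∩ ↑T := ⟨Or.inl hx, hT₀sub n hx.1⟩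
        have hxc : x ∉ (↑T₀ : Set Γ)ᶜ := fun hc => hc hx.1
        rw [Set.indicator_of_mem hx, Set.indicator_of_mem hxA, Set.indicator_of_notMem hxc]
        linarith
      · rw [Set.indicator_of_notMem hx]
        by_cases hxA : x ∈ A ∩ ↑T
        · rcases hAT n x hxA.1 hxA.2 with hc | ⟨m', hm', _⟩
          · exact absurd hc hx
          · have hxT₀ : x ∈ (↑T₀ : Set Γ)ᶜ := fun hc => hSmnT₀ m' x hm' hc
            rw [Set.indicator_of_mem hxT₀, Set.indicator_of_mem hxA]
            linarith [neg_abs_le (W x)]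
        · rw [Set.indicator_of_notMem hxA]
          have h0 : 0 ≤ Set.indicator (↑T₀ : Set Γ)ᶜ (fun x => |W x|) x :=
            Set.indicator_nonneg (fun _ _ => abs_nonneg _) x
          linarith
    have hts := Summable.tsum_le_tsum hpt (hB0sum.sub hT₀sum) hWind
    rw [Summable.tsum_sub hB0sum hT₀sum] at hts
    exact hts
  have hstep3 : PW - δ' ≤ ∑' x, {x | x ∈ T₀ ∧ 0 < W x}.indicator W x := by
    have hpt : ∀ x, max (W x) 0 ≤ {x | x ∈ T₀ ∧ 0 < W x}.indicator W x
        + Set.indicator (↑T₀ : Set Γ)ᶜ (fun x => |W x|) x := by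
      intro x
      by_cases hx0 : x ∈ (↑T₀ : Set Γ)
      · have hxc : x ∉ (↑T₀ : Set Γ)ᶜ := fun hc => hc hx0
        rw [Set.indicator_of_notMem hxc]
        by_cases hW : 0 < W x
        · have hmem' : x ∈ {x | x ∈ T₀ ∧ 0 < W x} := ⟨hx0, hW⟩
          rw [Set.indicator_of_mem hmem']
          rw [max_eq_left hW.le]
          linarith
        · push_neg at hW
          rw [Set.indicator_of_notMem (fun hc => hW.not_gt hc.2), max_eq_right hW]
          norm_num
      · have hxc : x ∈ (↑T₀ : Set Γ)ᶜ := hx0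
        have hnx : x ∉ {x | x ∈ T₀ ∧ 0 < W x} := fun hc => hx0 hc.1
        rw [Set.indicator_of_mem hxc, Set.indicator_of_notMem hnx]
        have := le_abs_self (W x)
        have h2 := abs_nonneg (W x)
        rw [max_le_iff]
        constructor <;> linarith
    have hts := Summable.tsum_le_tsum hpt hWP (hB0sum.add hT₀sum)
    rw [Summable.tsum_add hB0sum hT₀sum] at hts
    linarith
  have hterm1 : PW - 3*δ' ≤ ∑' x, (A ∩ ↑T).indicator Y x := by
    linarith
  -- term 2 : the hump
  have hTmaxsum : Summable (Set.indicator (↑T : Set Γ) fun x => |Y x - W x| + max (W x) 0) :=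
    (hYW.add hWP).indicator _
  have hterm2 : PY - PW - 2*δ' ≤ ∑' x, SS.indicator Y x := by
    have hpt : ∀ x, max (Y x) 0 ≤ SS.indicator Y x
        + Set.indicator (↑T : Set Γ) (fun x => |Y x - W x| + max (W x) 0) x
        + Set.indicator (↑RR : Set Γ)ᶜ (fun x => |Y x|) x := by
      intro x
      have hS0 : 0 ≤ SS.indicator Y x := Set.indicator_nonneg (fun a ha => (hSpos a ha).le) x
      have hT0 : 0 ≤ Set.indicator (↑T : Set Γ) (fun x => |Y x - W x| + max (W x) 0) x :=
        Set.indicator_nonneg (fun a _ => by positivity) x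
      have hR0 : 0 ≤ Set.indicator (↑RR : Set Γ)ᶜ (fun x => |Y x|) x :=
        Set.indicator_nonneg (fun _ _ => abs_nonneg _) x
      by_cases hxT : x ∈ (↑T : Set Γ)
      · rw [Set.indicator_of_mem hxT]
        have : max (Y x) 0 ≤ |Y x - W x| + max (W x) 0 := by
          rw [max_le_iff]
          constructor
          · linarith [le_abs_self (Y x - W x), le_max_left (W x) 0]
          · positivity
        linarith
      · by_cases hxR : x ∈ (↑RR : Set Γ)
        · by_cases hY : 0 < Y x
          · have hxS : x ∈ SS := ⟨hxR, hxT, hY⟩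
            rw [Set.indicator_of_mem hxS, max_eq_left hY.le]
            linarith
          · push_neg at hY
            rw [max_eq_right hY]
            linarith
        · have hxc : x ∈ (↑RR : Set Γ)ᶜ := hxR
          rw [Set.indicator_of_mem hxc]
          have : max (Y x) 0 ≤ |Y x| := max_le (le_abs_self _) (abs_nonneg _)
          linarith
    have hts := Summable.tsum_le_tsum hpt hYPs ((hsum2.add hTmaxsum).add hindRR)
    rw [Summable.tsum_add (hsum2.add hTmaxsum) hindRR, Summable.tsum_add hsum2 hTmaxsum] at hts
    have hTmaxval : ∑' x, Set.indicator (↑T : Set Γ) (fun x => |Y x - W x| + max (W x) 0) x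
        ≤ δ' + PW := by
      rw [tsum_indicator_finset']
      rw [Finset.sum_add_distrib]
      have hs2 : ∑ x ∈ T, max (W x) 0 ≤ PW :=
        Summable.sum_le_tsum T (fun x _ => le_max_right _ _) hWP
      linarith
    linarith
  -- conclusion
  have hfinal : c + ε/2 < ∑' x, A.indicator Y x := by
    rw [htsplit]
    have h6 : PY - 6*δ' ≤ (∑' x, (A ∩ ↑T).indicator Y x) + (∑' x, SS.indicator Y x)
        + ∑' x, (A \ (↑T ∪ ↑RR)).indicator Y x := by linarith
    have : c + ε - 6*δ' > c + ε/2 := by rw [hδ']; linarith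
    linarith
  have habs := le_abs_self (∑' x, A.indicator Y x)
  linarith

set_option maxHeartbeats 2000000 in
/-- If `M` is a metric space with `a ≤ d(x,y) ≤ b` for all distinct `x, y` (with
`0 < a ≤ b`), then the Lipschitz-free space `F(M)` has the `(b/a)`-Schur property. The free
space `F` is axiomatized by its defining duality with `1`-Lipschitz functions vanishing at
the base point, together with density of the span of the Dirac images. -/
theorem stmt16 {M : Type*} [MetricSpace M] (base : M) (a b : ℝ)
    (ha : 0 < a) (hab : a ≤ b)
    (hsep : ∀ x y : M, x ≠ y → a ≤ dist x y ∧ dist x y ≤ b)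
    {F : Type*} [NormedAddCommGroup F] [NormedSpace ℝ F] [CompleteSpace F]
    (δm : M → F) (hbase : δm base = 0)
    (hdense : (Submodule.span ℝ (Set.range δm)).topologicalClosure = ⊤)
    (hlip : ∀ g : F →L[ℝ] ℝ, ‖g‖ ≤ 1 → LipschitzWith 1 fun x => g (δm x))
    (hext : ∀ h : M → ℝ, h base = 0 → LipschitzWith 1 h →
      ∃ g : F →L[ℝ] ℝ, ‖g‖ ≤ 1 ∧ ∀ x, g (δm x) = h x)
    (z : ℕ → F) (hz : ∃ K : ℝ, ∀ n, ‖z n‖ ≤ K) :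
    ca z ≤ (b / a) * delta z := by
  classical
  obtain ⟨K, hK⟩ := hz
  have hK0 : 0 ≤ K := le_trans (norm_nonneg (z 0)) (hK 0)
  have hb : 0 < b := lt_of_lt_of_le ha hab
  have hd : Dense (↑(Submodule.span ℝ (Set.range δm)) : Set F) :=
    Submodule.dense_iff_topologicalClosure_eq_top.mpr hdense
  -- coordinate functionals
  have hEex : ∀ x : M, ∃ E : F →L[ℝ] ℝ, ‖E‖ ≤ 1 ∧
      (∀ y, E (δm y) = if y = x ∧ ¬ x = base then a else 0) ∧ (x = base → E = 0) := by
    intro x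
    by_cases hx : x = base
    · refine ⟨0, by simp, fun y => ?_, fun _ => rfl⟩
      simp [hx]
    · have hlip1 : LipschitzWith 1 (fun y : M => if y = x ∧ ¬ x = base then a else 0) := by
        apply LipschitzWith.of_dist_le_mul
        intro y y'
        by_cases hyy : y = y'
        · simp [hyy, dist_nonneg]
        · simp only [NNReal.coe_one, one_mul, Real.dist_eq]
          have hd1 := (hsep y y' hyy).1
          have hva : |(if y = x ∧ ¬ x = base then a else 0) -
              (if y' = x ∧ ¬ x = base then a else 0)| ≤ a := by
            split_ifs <;> simp [abs_of_nonneg ha.le, ha.le]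
          linarith
      have hzero : (fun y : M => if y = x ∧ ¬ x = base then a else 0) base = 0 := by
        show (if base = x ∧ ¬ x = base then a else 0) = 0
        rw [if_neg]
        rintro ⟨h1, h2⟩
        exact h2 h1.symm
      obtain ⟨g, hg1, hg2⟩ := hext _ hzero hlip1
      exact ⟨g, hg1, hg2, fun hc => absurd hc hx⟩
  choose E hE1 hE2 hE3 using hEex
  set u : F → M → ℝ := fun v x => a⁻¹ * E x v with hudef
  have hu0 : ∀ v, u v base = 0 := fun v => by
    simp [hudef, hE3 base rfl]
  have hP1 : ∀ y x, u (δm y) x = if y = x ∧ ¬ x = base then 1 else 0 := by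
    intro y x
    have h0 : u (δm y) x = a⁻¹ * E x (δm y) := rfl
    rw [h0, hE2 x y]
    split_ifs
    · field_simp
    · simp
  -- partial sum bound
  have L1 : ∀ (Sf : Finset M) (v : F), ∑ x ∈ Sf, |u v x| ≤ 2 / a * ‖v‖ := by
    intro Sf v
    set S' : Finset M := Sf.erase base with hS'
    have hsum_eq : ∑ x ∈ Sf, |u v x| = ∑ x ∈ S', |u v x| := by
      refine (Finset.sum_subset (Finset.erase_subset _ _) ?_).symm
      intro x hx hx'
      have : x = base := by
        by_contra hc
        exact hx' (Finset.mem_erase.mpr ⟨hc, hx⟩)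
      rw [this, hu0, abs_zero]
    set σ : M → ℝ := fun x => if 0 ≤ E x v then 1 else -1 with hσ
    have hσa : ∀ x, |σ x| = 1 := fun x => by
      simp only [hσ]; split_ifs <;> simp
    set hfun : M → ℝ := fun y => if y ∈ S' then a/2 * σ y else 0 with hhfun
    have habs : ∀ y, |hfun y| ≤ a/2 := by
      intro y
      simp only [hhfun]
      split_ifs with h0
      · rw [abs_mul, hσa, mul_one, abs_of_nonneg (by linarith)]
      · simp; linarith
    have hfb : hfun base = 0 := by
      simp only [hhfun]
      rw [if_neg (Finset.notMem_erase base Sf)]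
    have hflip : LipschitzWith 1 hfun := by
      apply LipschitzWith.of_dist_le_mul
      intro y y'
      by_cases hyy : y = y'
      · simp [hyy, dist_nonneg]
      · simp only [NNReal.coe_one, one_mul, Real.dist_eq]
        have hd1 := (hsep y y' hyy).1
        have := abs_sub (hfun y) (hfun y')
        have h1 := habs y
        have h2 := habs y'
        linarith
    obtain ⟨g, hg1, hg2⟩ := hext hfun hfb hflip
    have hgid : g = ∑ x ∈ S', (σ x / 2) • E x := by
      refine ContinuousLinearMap.ext_on hd ?_
      rintro _ ⟨y, rfl⟩
      rw [hg2 y]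
      rw [ContinuousLinearMap.sum_apply]
      symm
      have hterm : ∀ x ∈ S', ((σ x / 2) • E x) (δm y)
          = if y = x then σ x / 2 * a else 0 := by
        intro x hx
        have hxb : ¬ x = base := (Finset.mem_erase.mp hx).1
        simp only [ContinuousLinearMap.smul_apply, hE2 x y, smul_eq_mul]
        by_cases hc : y = x
        · rw [if_pos ⟨hc, hxb⟩, if_pos hc]
        · rw [if_neg (fun hcc => hc hcc.1), if_neg hc]
          ring
      calc ∑ x ∈ S', ((σ x / 2) • E x) (δm y) = ∑ x ∈ S', if y = x then σ x / 2 * a else 0 :=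
            Finset.sum_congr rfl hterm
        _ = if y ∈ S' then σ y / 2 * a else 0 := Finset.sum_ite_eq S' y _
        _ = hfun y := by simp only [hhfun]; split_ifs <;> ring
    have hgv : g v = ∑ x ∈ S', σ x / 2 * E x v := by
      rw [hgid, ContinuousLinearMap.sum_apply]
      exact Finset.sum_congr rfl fun x _ => by
        simp [ContinuousLinearMap.smul_apply, smul_eq_mul]
    have hsign : ∀ x, σ x * E x v = |E x v| := by
      intro x
      simp only [hσ]
      split_ifs with h0
      · rw [one_mul, abs_of_nonneg h0]
      · push_neg at h0
        rw [abs_of_neg h0]; ring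
    have hsum_abs : ∑ x ∈ S', |u v x| = a⁻¹ * (2 * g v) := by
      rw [hgv, Finset.mul_sum, Finset.mul_sum]
      refine Finset.sum_congr rfl fun x _ => ?_
      have h0 : u v x = a⁻¹ * E x v := rfl
      rw [h0]
      rw [abs_mul, abs_of_nonneg (inv_nonneg.mpr ha.le), ← hsign x]
      ring
    have hgvb : g v ≤ ‖v‖ := by
      have := g.le_opNorm v
      have h2 : ‖g v‖ ≤ 1 * ‖v‖ := le_trans this (mul_le_mul_of_nonneg_right hg1 (norm_nonneg _))
      rw [one_mul, Real.norm_eq_abs] at h2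
      linarith [le_abs_self (g v)]
    rw [hsum_eq, hsum_abs]
    have ha' : a⁻¹ * (2 * g v) ≤ a⁻¹ * (2 * ‖v‖) := by
      refine mul_le_mul_of_nonneg_left (by linarith) (inv_nonneg.mpr ha.le)
    calc a⁻¹ * (2 * g v) ≤ a⁻¹ * (2 * ‖v‖) := ha'
      _ = 2 / a * ‖v‖ := by rw [div_eq_mul_inv]; ring
  have husab : ∀ v, Summable fun x => |u v x| := fun v =>
    summable_of_sum_le (c := 2 / a * ‖v‖) (fun x => abs_nonneg _) (fun Sf => L1 Sf v)
  have husum : ∀ v, Summable (u v) := fun v => summable_abs_iff.mp (husab v)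
  have htb : ∀ v, ∑' x, |u v x| ≤ 2 / a * ‖v‖ := fun v =>
    Summable.tsum_le_of_sum_le (husab v) (fun Sf => L1 Sf v)
  have hsummulb : ∀ (v : F) (h : M → ℝ) (C : ℝ), (∀ x, |h x| ≤ C) →
      Summable (fun x => u v x * h x) := by
    intro v h C hhb
    refine summable_abs_iff.mp (((husab v).mul_right C).of_nonneg_of_le
      (fun x => abs_nonneg _) fun x => ?_)
    rw [abs_mul]
    exact mul_le_mul_of_nonneg_left (hhb x) (abs_nonneg _)
  have habs_sum : ∀ (v : F) (h : M → ℝ) (C : ℝ), (∀ x, |h x| ≤ C) →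
      Summable (fun x => |u v x * h x|) := by
    intro v h C hhb
    refine ((husab v).mul_right C).of_nonneg_of_le (fun x => abs_nonneg _) fun x => ?_
    rw [abs_mul]
    exact mul_le_mul_of_nonneg_left (hhb x) (abs_nonneg _)
  -- the fundamental representation formula for functionals
  have hformula : ∀ h : M → ℝ, (∀ x, |h x| ≤ b) → h base = 0 →
      ∀ g : F →L[ℝ] ℝ, (∀ x, g (δm x) = h x) → ∀ v, g v = ∑' x, u v x * h x := by
    intro h hhb hhbase g hg
    have hsummul : ∀ v, Summable fun x => u v x * h x := fun v => hsummulb v h b hhb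
    have hmadd : ∀ v v' : F, ∑' x, u (v + v') x * h x
        = (∑' x, u v x * h x) + ∑' x, u v' x * h x := by
      intro v v'
      have hpt : ∀ x, u (v + v') x * h x = u v x * h x + u v' x * h x := fun x => by
        have h0 : u (v + v') x = a⁻¹ * E x (v + v') := rfl
        have h1 : u v x = a⁻¹ * E x v := rfl
        have h2 : u v' x = a⁻¹ * E x v' := rfl
        rw [h0, h1, h2, map_add]
        ring
      rw [tsum_congr hpt, Summable.tsum_add (hsummul v) (hsummul v')]
    have hmsmul : ∀ (r : ℝ) (v : F), ∑' x, u (r • v) x * h x = r * ∑' x, u v x * h x := by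
      intro r v
      have hpt : ∀ x, u (r • v) x * h x = r * (u v x * h x) := fun x => by
        have h0 : u (r • v) x = a⁻¹ * E x (r • v) := rfl
        have h1 : u v x = a⁻¹ * E x v := rfl
        rw [h0, h1, map_smul, smul_eq_mul]
        ring
      rw [tsum_congr hpt]
      exact (hsummul v).tsum_mul_left r
    have hTb : ∀ v : F, |∑' x, u v x * h x| ≤ b * (2/a) * ‖v‖ := by
      intro v
      have h1 : |∑' x, u v x * h x| ≤ ∑' x, |u v x * h x| := by
        calc |∑' x, u v x * h x| = ‖∑' x, u v x * h x‖ := (Real.norm_eq_abs _).symm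
          _ ≤ ∑' x, ‖u v x * h x‖ := norm_tsum_le_tsum_norm
              (by simpa only [Real.norm_eq_abs] using habs_sum v h b hhb)
          _ = ∑' x, |u v x * h x| := by simp only [Real.norm_eq_abs]
      have h2 : ∑' x, |u v x * h x| ≤ ∑' x, |u v x| * b :=
        Summable.tsum_le_tsum (fun x => by
          rw [abs_mul]
          exact mul_le_mul_of_nonneg_left (hhb x) (abs_nonneg _))
          (habs_sum v h b hhb) ((husab v).mul_right b)
      have h3 : ∑' x, |u v x| * b = (∑' x, |u v x|) * b := tsum_mul_right
      have h4 : (∑' x, |u v x|) * b ≤ (2 / a * ‖v‖) * b :=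
        mul_le_mul_of_nonneg_right (htb v) hb.le
      have h5 : (2 / a * ‖v‖) * b = b * (2/a) * ‖v‖ := by ring
      linarith
    set T : F →L[ℝ] ℝ := LinearMap.mkContinuous
      { toFun := fun v => ∑' x, u v x * h x
        map_add' := hmadd
        map_smul' := fun r v => by
          rw [RingHom.id_apply, smul_eq_mul]
          exact hmsmul r v }
      (b * (2 / a))
      (fun v => by rw [Real.norm_eq_abs]; exact hTb v) with hTdef
    have hgT : g = T := by
      refine ContinuousLinearMap.ext_on hd ?_
      rintro _ ⟨y, rfl⟩
      have h0 : ∀ x, x ≠ y → u (δm y) x * h x = 0 := fun x hxy => by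
        rw [hP1 y x, if_neg (fun hc => hxy hc.1.symm), zero_mul]
      have h1 : ∑' x, u (δm y) x * h x = u (δm y) y * h y := tsum_eq_single y h0
      rw [hg y]
      show h y = T (δm y)
      have hTy : T (δm y) = ∑' x, u (δm y) x * h x := rfl
      rw [hTy, h1, hP1 y y]
      by_cases hyb : y = base
      · rw [if_neg (fun hc => hc.2 hyb), zero_mul, hyb, hhbase]
      · rw [if_pos ⟨rfl, hyb⟩, one_mul]
    intro v
    rw [hgT]
    rfl
  -- the norm is controlled by positive and negative coordinate masses
  have hmaxPN : ∀ v : F,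
      ‖v‖ ≤ b * max (∑' x, max (u v x) 0) (∑' x, max (-u v x) 0) := by
    intro v
    have hM0 : 0 ≤ b * max (∑' x, max (u v x) 0) (∑' x, max (-u v x) 0) := by
      refine mul_nonneg hb.le (le_trans (tsum_nonneg fun x => le_max_right (u v x) 0)
        (le_max_left _ _))
    refine NormedSpace.norm_le_dual_bound ℝ v hM0 (fun f => ?_)
    by_cases hf : f = 0
    · simp [hf]
    · set g : F →L[ℝ] ℝ := ‖f‖⁻¹ • f with hgdef
      have hfn : 0 < ‖f‖ := norm_pos_iff.mpr hf
      have hg1 : ‖g‖ ≤ 1 := by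
        rw [hgdef]
        refine le_trans (ContinuousLinearMap.opNorm_smul_le _ _) ?_
        rw [norm_inv, norm_norm, inv_mul_cancel₀ hfn.ne']
      set h : M → ℝ := fun x => g (δm x) with hhdef
      have hh0 : h base = 0 := by simp [hhdef, hbase]
      have hhl : LipschitzWith 1 h := hlip g hg1
      have hhpair : ∀ x y', |h x - h y'| ≤ b := by
        intro x y'
        by_cases hxy : x = y'
        · simp [hxy]
          exact hb.le
        · have hdl := hhl.dist_le_mul x y'
          rw [Real.dist_eq, NNReal.coe_one, one_mul] at hdl
          exact le_trans hdl (hsep x y' hxy).2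
      have hhb : ∀ x, |h x| ≤ b := fun x => by
        have h1 := hhpair x base
        rwa [hh0, sub_zero] at h1
      have hid : g v = ∑' x, u v x * h x := hformula h hhb hh0 g (fun x => rfl) v
      have hib := interval_bound hb.le (u v) h (husab v) hhpair base hh0
      rw [← hid] at hib
      have hfg : f v = ‖f‖ * g v := by
        simp only [hgdef, ContinuousLinearMap.smul_apply, smul_eq_mul]
        field_simp
      rw [Real.norm_eq_abs, hfg, abs_mul, abs_of_pos hfn, mul_comm]
      exact mul_le_mul_of_nonneg_right hib hfn.le
  -- delta facts
  have hca0 : ca (fun _ : ℕ => (0:ℝ)) = 0 := by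
    have himg : ∀ n : ℕ, (fun _ : ℕ => (0:ℝ)) '' Set.Ici n = {0} := fun n =>
      Set.Nonempty.image_const Set.nonempty_Ici 0
    simp only [ca, himg, Metric.diam_singleton, ciInf_const]
  have hbddD : BddAbove {r : ℝ | ∃ f : F →L[ℝ] ℝ, ‖f‖ ≤ 1 ∧ r = ca fun n => f (z n)} := by
    refine ⟨2*K, ?_⟩
    rintro r ⟨f, hf1, rfl⟩
    refine ca_le_of_tail _ 0 (by linarith) ?_
    intro k _ j _
    rw [Real.dist_eq]
    have h1 : f (z k) - f (z j) = f (z k - z j) := (map_sub f _ _).symm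
    rw [h1, ← Real.norm_eq_abs]
    have h2 := f.le_opNorm (z k - z j)
    have h3 : ‖z k - z j‖ ≤ ‖z k‖ + ‖z j‖ := norm_sub_le _ _
    have h4 := hK k
    have h5 := hK j
    nlinarith [norm_nonneg (z k - z j)]
  have hD0 : 0 ≤ delta z := by
    refine le_csSup hbddD ⟨0, by simp, ?_⟩
    simpa using hca0.symm
  have hDle : ∀ g : F →L[ℝ] ℝ, ‖g‖ ≤ 1 → ca (fun n => g (z n)) ≤ delta z :=
    fun g hg => le_csSup hbddD ⟨g, hg, rfl⟩
  -- main estimate for every ε > 0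
  have main : ∀ ε : ℝ, 0 < ε → ca z ≤ (b/a) * delta z + b * ε := by
    intro ε hε
    set D := delta z with hDdef
    set uu : ℕ → ↥{x : M | ¬ x = base} → ℝ := fun n p => u (z n) ↑p with huu
    have hsumuu : ∀ n, Summable fun p => |uu n p| := fun n =>
      (husab (z n)).subtype _
    have hBuu : ∀ n, ∑' p, |uu n p| ≤ 2 / a * K := by
      intro n
      have h1 : ∑' p : ↥{x : M | ¬ x = base}, |uu n p|
          = ∑' x, Set.indicator {x : M | ¬ x = base} (fun x => |u (z n) x|) x := by
        simp only [huu]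
        exact tsum_subtype {x : M | ¬ x = base} (fun x => |u (z n) x|)
      rw [h1]
      have h2 : ∑' x, Set.indicator {x : M | ¬ x = base} (fun x => |u (z n) x|) x
          ≤ ∑' x, |u (z n) x| :=
        Summable.tsum_le_tsum (fun x => Set.indicator_le_self' (fun x _ => abs_nonneg _) x)
          ((husab (z n)).indicator _) (husab (z n))
      have h3 := htb (z n)
      have h4 : 2 / a * ‖z n‖ ≤ 2 / a * K :=
        mul_le_mul_of_nonneg_left (hK n) (by positivity)
      linarith
    have hv'props : True := trivial
    have hH : ∀ v : ↥{x : M | ¬ x = base} → ℝ, (∀ p, 0 ≤ v p ∧ v p ≤ 1) →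
        ∃ n, ∀ k ≥ n, ∀ j ≥ n, |∑' p, (uu k p - uu j p) * v p| ≤ D/a + ε/2 := by
      intro v hv
      set v' : M → ℝ := fun x => if hx : x = base then 0 else v ⟨x, hx⟩ with hv'
      have hv'01 : ∀ x, 0 ≤ v' x ∧ v' x ≤ 1 := fun x => by
        simp only [hv']
        split_ifs with h0
        · norm_num
        · exact hv ⟨x, h0⟩
      have hv'b : v' base = 0 := by simp [hv']
      have hv'abs : ∀ x, |v' x| ≤ 1 := fun x =>
        abs_le.mpr ⟨by linarith [(hv'01 x).1], (hv'01 x).2⟩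
      set hf : M → ℝ := fun x => a * v' x with hhf
      have hfb0 : hf base = 0 := by simp only [hhf]; rw [hv'b, mul_zero]
      have hfbnd : ∀ x, |hf x| ≤ b := fun x => by
        simp only [hhf]
        rw [abs_mul, abs_of_pos ha]
        nlinarith [hv'abs x, abs_nonneg (v' x), ha.le]
      have hflip : LipschitzWith 1 hf := by
        apply LipschitzWith.of_dist_le_mul
        intro x y'
        by_cases hxy : x = y'
        · simp [hxy, dist_nonneg]
        · simp only [NNReal.coe_one, one_mul, Real.dist_eq]
          have hd1 := (hsep x y' hxy).1
          have h1 := (hv'01 x).1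
          have h2 := (hv'01 x).2
          have h3 := (hv'01 y').1
          have h4 := (hv'01 y').2
          simp only [hhf]
          rw [abs_le]
          constructor <;> nlinarith
      obtain ⟨g, hg1, hg2⟩ := hext hf hfb0 hflip
      have hgid : ∀ w, g w = ∑' x, u w x * hf x := hformula hf hfbnd hfb0 g hg2
      have hsb : ∀ n, |g (z n)| ≤ K := fun n => by
        have h1 := g.le_opNorm (z n)
        rw [Real.norm_eq_abs] at h1
        nlinarith [hK n, norm_nonneg (z n)]
      have hcag : ca (fun n => g (z n)) ≤ D := hDle g hg1
      obtain ⟨n, hn⟩ := tail_of_ca hsb hcag (by positivity : (0:ℝ) < a * (ε/2))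
      refine ⟨n, fun k hk j hj => ?_⟩
      have hdiff := hn k hk j hj
      have hsumk : Summable fun x => u (z k) x * hf x := hsummulb (z k) hf b hfbnd
      have hsumj : Summable fun x => u (z j) x * hf x := hsummulb (z j) hf b hfbnd
      have e1 : g (z k) - g (z j) = ∑' x, (u (z k) x - u (z j) x) * hf x := by
        rw [hgid (z k), hgid (z j), ← Summable.tsum_sub hsumk hsumj]
        exact tsum_congr fun x => by ring
      have hsum3 : Summable fun x => (u (z k) x - u (z j) x) * v' x := by
        have hrw : (fun x => (u (z k) x - u (z j) x) * v' x)
            = fun x => u (z k) x * v' x - u (z j) x * v' x := by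
          funext x; ring
        rw [hrw]
        exact (hsummulb (z k) v' 1 hv'abs).sub (hsummulb (z j) v' 1 hv'abs)
      have e3 : ∑' x, (u (z k) x - u (z j) x) * hf x
          = a * ∑' x, (u (z k) x - u (z j) x) * v' x := by
        have e2 : ∀ x, (u (z k) x - u (z j) x) * hf x
            = a * ((u (z k) x - u (z j) x) * v' x) := fun x => by
          simp only [hhf]; ring
        rw [tsum_congr e2]
        exact hsum3.tsum_mul_left a
      have hsupp : Function.support (fun x => (u (z k) x - u (z j) x) * v' x)
          ⊆ {x : M | ¬ x = base} := by
        intro x hx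
        simp only [Set.mem_setOf_eq]
        intro hc
        apply hx
        show (u (z k) x - u (z j) x) * v' x = 0
        rw [hc, hv'b, mul_zero]
      have e4 : ∑' p : ↥{x : M | ¬ x = base}, (uu k p - uu j p) * v p
          = ∑' x, (u (z k) x - u (z j) x) * v' x := by
        rw [← tsum_subtype_eq_of_support_subset hsupp]
        refine tsum_congr fun p => ?_
        show (uu k p - uu j p) * v p = (u (z k) ↑p - u (z j) ↑p) * v' ↑p
        have hvp : v' ↑p = v p := by
          simp only [hv']
          rw [dif_neg p.2]
        rw [hvp]
      have h5 : |a * ∑' x, (u (z k) x - u (z j) x) * v' x| ≤ D + a * (ε/2) := by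
        rw [← e3, ← e1]
        exact hdiff
      rw [abs_mul, abs_of_pos ha] at h5
      rw [e4]
      have h6 : |∑' x, (u (z k) x - u (z j) x) * v' x| ≤ (D + a * (ε/2)) / a := by
        rw [le_div_iff₀ ha]
        linarith
      have h7 : (D + a * (ε/2)) / a = D/a + ε/2 := by
        rw [add_div, mul_div_cancel_left₀ _ ha.ne']
      linarith
    obtain ⟨n₀, hn₀⟩ := core (2 / a * K) uu hsumuu hBuu (D/a) ε hε hH
    have htail : ∀ k ≥ n₀, ∀ j ≥ n₀, dist (z k) (z j) ≤ b * (D/a + ε) := by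
      intro k hk j hj
      rw [dist_eq_norm]
      have hPM : ∀ k' j' : ℕ, (∑' p : ↥{x : M | ¬ x = base}, max (uu k' p - uu j' p) 0)
          = ∑' x, max (u (z k') x - u (z j') x) 0 := by
        intro k' j'
        have hsupp2 : Function.support (fun x => max (u (z k') x - u (z j') x) 0)
            ⊆ {x : M | ¬ x = base} := by
          intro x hx
          simp only [Set.mem_setOf_eq]
          intro hc
          apply hx
          show max (u (z k') x - u (z j') x) 0 = 0
          rw [hc, hu0, hu0]
          simp
        rw [← tsum_subtype_eq_of_support_subset hsupp2]
      have h1 : ∑' x, max (u (z k) x - u (z j) x) 0 ≤ D/a + ε := by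
        rw [← hPM k j]
        exact hn₀ k hk j hj
      have h2 : ∑' x, max (u (z j) x - u (z k) x) 0 ≤ D/a + ε := by
        rw [← hPM j k]
        exact hn₀ j hj k hk
      have h3 := hmaxPN (z k - z j)
      have hcoord : ∀ x, u (z k - z j) x = u (z k) x - u (z j) x := fun x => by
        have h0 : u (z k - z j) x = a⁻¹ * E x (z k - z j) := rfl
        have hα : u (z k) x = a⁻¹ * E x (z k) := rfl
        have hβ : u (z j) x = a⁻¹ * E x (z j) := rfl
        rw [h0, map_sub, hα, hβ]
        ring
      have e5 : ∑' x, max (u (z k - z j) x) 0 = ∑' x, max (u (z k) x - u (z j) x) 0 :=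
        tsum_congr fun x => by rw [hcoord x]
      have e6 : ∑' x, max (-u (z k - z j) x) 0 = ∑' x, max (u (z j) x - u (z k) x) 0 :=
        tsum_congr fun x => by rw [hcoord x]; congr 1; ring
      rw [e5, e6] at h3
      have h4 : max (∑' x, max (u (z k) x - u (z j) x) 0)
          (∑' x, max (u (z j) x - u (z k) x) 0) ≤ D/a + ε := max_le h1 h2
      calc ‖z k - z j‖ ≤ _ := h3
        _ ≤ b * (D/a + ε) := mul_le_mul_of_nonneg_left h4 hb.le
    have hca := ca_le_of_tail z n₀
      (C := b * (D/a + ε))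
      (mul_nonneg hb.le (add_nonneg (div_nonneg hD0 ha.le) hε.le)) htail
    calc ca z ≤ b * (D/a + ε) := hca
      _ = (b/a) * D + b * ε := by field_simp
  refine le_of_forall_pos_le_add fun η hη => ?_
  have hmm := main (η / b) (by positivity)
  have : b * (η / b) = η := by field_simp
  rw [this] at hmm
  exact hmm
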